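/- arXiv:2106.09823 — 5 statements merged into one kernel-verified Lean document; each statement's English description precedes it below -/
import Mathlib

section
/- For any graph G of order n, n / ρ_o(G) ≤ p_o(G) ≤ n − ρ_o(G) + 1, where ρ_o(G) is the maximum cardinality of an open packing in G. -/
open SimpleGraph

variable {V W : Type*}

/-- The two-step graph: vertices adjacent iff they share a common neighbor in `G`. -/
def SimpleGraph.twoStep (G : SimpleGraph V) : SimpleGraph V where
  Adj u v := u ≠ v ∧ ∃ w, G.Adj w u ∧ G.Adj w v
  symm := ⟨fun u v ⟨h, w, h1, h2⟩ => ⟨h.symm, w, h2, h1⟩⟩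
  loopless := ⟨fun u ⟨h, _⟩ => h rfl⟩

/-- `B` is an open packing: no two distinct vertices of `B` have a common neighbor. -/
def SimpleGraph.IsOpenPacking (G : SimpleGraph V) (B : Set V) : Prop :=
  ∀ u ∈ B, ∀ v ∈ B, u ≠ v → ∀ w, ¬(G.Adj w u ∧ G.Adj w v)

/-- The open packing partition number `p_o(G)`. -/
noncomputable def SimpleGraph.openPackingPartitionNum (G : SimpleGraph V) : ℕ :=
  sInf {k | ∃ f : V → Fin k, ∀ i, G.IsOpenPacking (f ⁻¹' {i})}

/-- `B` is a packing: distinct vertices of `B` have disjoint closed neighborhoods. -/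
def SimpleGraph.IsPacking (G : SimpleGraph V) (B : Set V) : Prop :=
  ∀ u ∈ B, ∀ v ∈ B, u ≠ v → ∀ w, ¬((G.Adj w u ∨ w = u) ∧ (G.Adj w v ∨ w = v))

/-- The 2-distance chromatic number `χ₂(G)`. -/
noncomputable def SimpleGraph.twoDistChromaticNum (G : SimpleGraph V) : ℕ :=
  sInf {k | ∃ f : V → Fin k, ∀ i, G.IsPacking (f ⁻¹' {i})}

/-- The open packing number `ρ_o(G)`. -/
noncomputable def SimpleGraph.openPackingNum (G : SimpleGraph V) [Fintype V] : ℕ :=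
  sSup {n | ∃ B : Finset V, G.IsOpenPacking ↑B ∧ B.card = n}

/-!
Each class of a partition into open packings has at most `ρ_o(G)` vertices, so `n ≤ p_o(G) ρ_o(G)`.
Conversely, a maximum open packing together with the remaining `n - ρ_o(G)` vertices as singleton
classes is a partition into open packings.
-/

namespace SimpleGraph

variable (G : SimpleGraph V)

lemma isOpenPacking_of_subsingleton {B : Set V} (h : B.Subsingleton) : G.IsOpenPacking B :=
  fun _ hu _ hv huv _ _ => huv (h hu hv)

lemma openPackingPartitionNum_le_card {ι : Type*} [Fintype ι] (f : V → ι)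
    (hf : ∀ i, G.IsOpenPacking (f ⁻¹' {i})) :
    G.openPackingPartitionNum ≤ Fintype.card ι :=
  Nat.sInf_le ⟨Fintype.equivFin ι ∘ f, fun i => by
    have hfiber : (Fintype.equivFin ι ∘ f) ⁻¹' {i} = f ⁻¹' {(Fintype.equivFin ι).symm i} := by
      ext; simp [Equiv.eq_symm_apply]
    exact hfiber ▸ hf _⟩

section Fintype

variable [Fintype V]

lemma bddAbove_openPackingCards :
    BddAbove {n | ∃ B : Finset V, G.IsOpenPacking ↑B ∧ B.card = n} :=
  ⟨Fintype.card V, fun _ ⟨B, _, hc⟩ => hc ▸ B.card_le_univ⟩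

lemma card_le_openPackingNum {B : Finset V} (h : G.IsOpenPacking ↑B) :
    B.card ≤ G.openPackingNum :=
  le_csSup G.bddAbove_openPackingCards ⟨B, h, rfl⟩

lemma exists_isOpenPacking_card_eq_openPackingNum :
    ∃ B : Finset V, G.IsOpenPacking ↑B ∧ B.card = G.openPackingNum :=
  Nat.sSup_mem (s := {n | ∃ B : Finset V, G.IsOpenPacking ↑B ∧ B.card = n})
    ⟨0, ∅, G.isOpenPacking_of_subsingleton (by simp), rfl⟩ G.bddAbove_openPackingCards

lemma card_le_mul_openPackingNum {k : ℕ} (f : V → Fin k)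
    (hf : ∀ i, G.IsOpenPacking (f ⁻¹' {i})) :
    Fintype.card V ≤ k * G.openPackingNum := by
  classical
  have hfiber (i : Fin k) : (Finset.univ.filter (f · = i)).card ≤ G.openPackingNum :=
    G.card_le_openPackingNum (by simpa [Set.preimage] using hf i)
  calc Fintype.card V = ∑ i : Fin k, (Finset.univ.filter (f · = i)).card :=
        Finset.card_eq_sum_card_fiberwise fun v _ => Finset.mem_univ (f v)
    _ ≤ ∑ _i : Fin k, G.openPackingNum := Finset.sum_le_sum fun i _ => hfiber i
    _ = k * G.openPackingNum := by simp

lemma exists_openPackingPartition :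
    ∃ f : V → Fin G.openPackingPartitionNum, ∀ i, G.IsOpenPacking (f ⁻¹' {i}) :=
  Nat.sInf_mem (s := {k | ∃ f : V → Fin k, ∀ i, G.IsOpenPacking (f ⁻¹' {i})})
    ⟨_, Fintype.equivFin V, fun _ =>
      G.isOpenPacking_of_subsingleton (Set.subsingleton_singleton.preimage (Equiv.injective _))⟩

lemma openPackingPartitionNum_le_card_compl_add_one [DecidableEq V] {B : Finset V}
    (hB : G.IsOpenPacking ↑B) : G.openPackingPartitionNum ≤ Fintype.card V - B.card + 1 := by
  let f : V → Option ↥Bᶜ := fun v => if hv : v ∈ B then none else some ⟨v, by simpa using hv⟩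
  have hf : ∀ i, G.IsOpenPacking (f ⁻¹' {i}) := by
    rintro i u hu v hv huv
    simp only [Set.mem_preimage, Set.mem_singleton_iff] at hu hv
    by_cases huB : u ∈ B <;> by_cases hvB : v ∈ B
    · exact hB u huB v hvB huv
    all_goals subst hu; simp [f, huB, hvB] at hv
    exact absurd hv.symm huv
  simpa using G.openPackingPartitionNum_le_card f hf

end Fintype

end SimpleGraph

theorem stmt_2 [Fintype V] (G : SimpleGraph V) :
    (Fintype.card V : ℝ) / G.openPackingNum ≤ G.openPackingPartitionNum ∧
    G.openPackingPartitionNum ≤ Fintype.card V - G.openPackingNum + 1 := by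
  classical
  constructor
  · obtain ⟨f, hf⟩ := G.exists_openPackingPartition
    have h := G.card_le_mul_openPackingNum f hf
    exact div_le_of_le_mul₀ (Nat.cast_nonneg _) (Nat.cast_nonneg _) (by exact_mod_cast h)
  · obtain ⟨B, hB, hBcard⟩ := G.exists_isOpenPacking_card_eq_openPackingNum
    exact hBcard ▸ G.openPackingPartitionNum_le_card_compl_add_one hB
end

section
/- For any graph G, χ₂(G)/2 ≤ p_o(G) ≤ χ₂(G), where χ₂(G) is the 2-distance chromatic number of G. -/
open SimpleGraph

variable {V W : Type*}

/-! A packing is an open packing, which gives `p_o ≤ χ₂`. Conversely, a vertex with two neighbours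
in an open packing `B` would be their common neighbour, so the edges inside `B` form a matching.
Marking the larger end of each such edge splits `B` into two independent open packings, that is,
two packings; splitting every class of an open packing partition this way gives `χ₂ ≤ 2 p_o`. -/

namespace SimpleGraph

variable {G : SimpleGraph V} {A B : Set V}

theorem IsPacking.isOpenPacking (h : G.IsPacking B) : G.IsOpenPacking B :=
  fun u hu v hv huv w hw => h u hu v hv huv w ⟨.inl hw.1, .inl hw.2⟩

theorem IsOpenPacking.mono (h : G.IsOpenPacking B) (hAB : A ⊆ B) : G.IsOpenPacking A :=
  fun u hu v hv => h u (hAB hu) v (hAB hv)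

theorem IsOpenPacking.isPacking_of_isIndepSet (h : G.IsOpenPacking B) (hind : G.IsIndepSet B) :
    G.IsPacking B := by
  rintro u hu v hv huv w ⟨hwu | rfl, hwv | rfl⟩
  · exact h u hu v hv huv w ⟨hwu, hwv⟩
  · exact hind hv hu huv.symm hwu
  · exact hind hu hv huv hwv
  · exact huv rfl

theorem IsOpenPacking.eq_of_adj_of_adj (h : G.IsOpenPacking B) {u v x : V} (hv : v ∈ B)
    (hx : x ∈ B) (huv : G.Adj u v) (hux : G.Adj u x) : v = x :=
  by_contra fun hvx => h v hv x hx hvx u ⟨huv, hux⟩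

theorem IsOpenPacking.exists_fin_two_coloring (h : G.IsOpenPacking B) :
    ∃ c : V → Fin 2, ∀ u ∈ B, ∀ v ∈ B, G.Adj u v → c u ≠ c v := by
  classical
  let r : V → V → Prop := WellOrderingRel
  let c : V → Fin 2 := fun u => if ∃ v ∈ B, G.Adj u v ∧ r v u then 1 else 0
  have hlt : ∀ u ∈ B, ∀ v ∈ B, G.Adj u v → r v u → c u = 1 ∧ c v = 0 := by
    intro u hu v hv huv hvu
    refine ⟨if_pos ⟨v, hv, huv, hvu⟩, if_neg ?_⟩
    rintro ⟨x, hx, hvx, hxv⟩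
    obtain rfl : u = x := h.eq_of_adj_of_adj hu hx huv.symm hvx
    exact asymm hvu hxv
  refine ⟨c, fun u hu v hv huv hc => ?_⟩
  rcases trichotomous_of r u v with huv' | rfl | hvu
  · obtain ⟨hv1, hu0⟩ := hlt v hv u hu huv.symm huv'
    simp [hv1, hu0] at hc
  · exact G.loopless.irrefl u huv
  · obtain ⟨hu1, hv0⟩ := hlt u hu v hv huv hvu
    simp [hu1, hv0] at hc

theorem IsOpenPacking.isPacking_sep_eq {α : Type*} (h : G.IsOpenPacking B) {c : V → α}
    (hc : ∀ u ∈ B, ∀ v ∈ B, G.Adj u v → c u ≠ c v) (a : α) :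
    G.IsPacking {x ∈ B | c x = a} :=
  (h.mono (Set.sep_subset _ _)).isPacking_of_isIndepSet
    fun u hu v hv _ huv => hc u hu.1 v hv.1 huv (hu.2.trans hv.2.symm)

theorem exists_isPacking_fibers_of_isOpenPacking_fibers {k : ℕ} {f : V → Fin k}
    (hf : ∀ i, G.IsOpenPacking (f ⁻¹' {i})) :
    ∃ g : V → Fin (2 * k), ∀ j, G.IsPacking (g ⁻¹' {j}) := by
  choose c hc using fun i => (hf i).exists_fin_two_coloring
  refine ⟨fun v => finProdFinEquiv (c (f v) v, f v), fun j => ?_⟩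
  obtain ⟨⟨a, i⟩, rfl⟩ := finProdFinEquiv.surjective j
  convert (hf i).isPacking_sep_eq (hc i) a using 1
  ext x
  simp only [Set.mem_preimage, Set.mem_singleton_iff, Set.mem_ofPred_eq,
    finProdFinEquiv.apply_eq_iff_eq, Prod.mk.injEq]
  exact ⟨fun ⟨hc, hf⟩ => ⟨hf, hf ▸ hc⟩, fun ⟨hf, hc⟩ => ⟨hf ▸ hc, hf⟩⟩

theorem twoDistChromaticNum_le_two_mul_openPackingPartitionNum (G : SimpleGraph V) :
    G.twoDistChromaticNum ≤ 2 * G.openPackingPartitionNum := by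
  -- For infinite `V` there may be no finite partition of either kind; both numbers are then
  -- `sInf ∅ = 0`.
  rcases Set.eq_empty_or_nonempty {k | ∃ f : V → Fin k, ∀ i, G.IsOpenPacking (f ⁻¹' {i})}
    with h | h
  · suffices {k | ∃ f : V → Fin k, ∀ i, G.IsPacking (f ⁻¹' {i})} = ∅ by
      simp [twoDistChromaticNum, this]
    refine Set.subset_eq_empty (fun k ⟨f, hf⟩ => ?_) h
    exact ⟨f, fun i => (hf i).isOpenPacking⟩
  · obtain ⟨f, hf⟩ := Nat.sInf_mem h
    exact Nat.sInf_le (exists_isPacking_fibers_of_isOpenPacking_fibers hf)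

theorem openPackingPartitionNum_le_twoDistChromaticNum (G : SimpleGraph V) :
    G.openPackingPartitionNum ≤ G.twoDistChromaticNum := by
  rcases Set.eq_empty_or_nonempty {k | ∃ f : V → Fin k, ∀ i, G.IsPacking (f ⁻¹' {i})}
    with h | h
  · suffices {k | ∃ f : V → Fin k, ∀ i, G.IsOpenPacking (f ⁻¹' {i})} = ∅ by
      simp [openPackingPartitionNum, this]
    refine Set.eq_empty_of_forall_notMem fun k ⟨f, hf⟩ => ?_
    exact Set.notMem_empty (2 * k) (h ▸ exists_isPacking_fibers_of_isOpenPacking_fibers hf)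
  · obtain ⟨f, hf⟩ := Nat.sInf_mem h
    exact Nat.sInf_le ⟨f, fun i => (hf i).isOpenPacking⟩

end SimpleGraph

theorem stmt_3_general (G : SimpleGraph V) :
    G.twoDistChromaticNum ≤ 2 * G.openPackingPartitionNum ∧
    G.openPackingPartitionNum ≤ G.twoDistChromaticNum :=
  ⟨G.twoDistChromaticNum_le_two_mul_openPackingPartitionNum,
    G.openPackingPartitionNum_le_twoDistChromaticNum⟩

theorem stmt_3 [Fintype V] (G : SimpleGraph V) :
    G.twoDistChromaticNum ≤ 2 * G.openPackingPartitionNum ∧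
    G.openPackingPartitionNum ≤ G.twoDistChromaticNum :=
  stmt_3_general G
end

section
/- For any graphs G and H, p_o(G □ H) ≤ min{ p_o(G)·χ₂(H), χ₂(G)·p_o(H) }, where G □ H is the Cartesian product. -/
open SimpleGraph

variable {V W : Type*}

/-! If `A` is an open packing of `G` and `B` a packing of `H`, then `A × B` is an open packing of
`G □ H`: a common neighbour of two vertices of `A × B` either moves both in `G` (excluded since `A`
is an open packing) or moves at least one of them in `H`, which puts two distinct vertices of `B`
at distance one or two. Colouring `(u, w)` by the pair of colours of `u` and `w` then gives
`p_o(G □ H) ≤ p_o(G) χ₂(H)`, and the other bound follows by the symmetry `G □ H ≃ H □ G`. -/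

namespace SimpleGraph

variable {V' : Type*} {G : SimpleGraph V} {G' : SimpleGraph V'} {H : SimpleGraph W}

theorem IsOpenPacking.preimage {B : Set V'} (hB : G'.IsOpenPacking B) (f : G →g G')
    (hf : Function.Injective f) : G.IsOpenPacking (f ⁻¹' B) :=
  fun u hu v hv huv w ⟨hwu, hwv⟩ =>
    hB (f u) hu (f v) hv (hf.ne huv) (f w) ⟨f.map_adj hwu, f.map_adj hwv⟩

theorem IsPacking.not_adj {B : Set W} (hB : H.IsPacking B) {u v : W} (hu : u ∈ B) (hv : v ∈ B) :
    ¬H.Adj u v :=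
  fun huv => hB u hu v hv huv.ne u ⟨Or.inr rfl, Or.inl huv⟩

theorem IsPacking.isOpenPacking_s4 {B : Set W} (hB : H.IsPacking B) : H.IsOpenPacking B :=
  fun u hu v hv huv w ⟨hwu, hwv⟩ => hB u hu v hv huv w ⟨Or.inl hwu, Or.inl hwv⟩

theorem IsOpenPacking.boxProd {A : Set V} {B : Set W} (hA : G.IsOpenPacking A)
    (hB : H.IsPacking B) : (G □ H).IsOpenPacking (A ×ˢ B) := by
  rintro ⟨u₁, w₁⟩ ⟨hu₁, hw₁⟩ ⟨u₂, w₂⟩ ⟨hu₂, hw₂⟩ hne ⟨x, y⟩ ⟨h₁, h₂⟩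
  simp only [boxProd_adj] at h₁ h₂ hne
  rcases h₁ with ⟨hx₁, hy₁⟩ | ⟨hy₁, hx₁⟩ <;> rcases h₂ with ⟨hx₂, hy₂⟩ | ⟨hy₂, hx₂⟩
  · subst hy₁ hy₂
    exact hA u₁ hu₁ u₂ hu₂ (fun h => hne (h ▸ rfl)) x ⟨hx₁, hx₂⟩
  · subst hy₁
    exact hB.not_adj hw₁ hw₂ hy₂
  · subst hy₂
    exact hB.not_adj hw₂ hw₁ hy₁
  · subst hx₁ hx₂
    exact hB.isOpenPacking_s4 w₁ hw₁ w₂ hw₂ (fun h => hne (h ▸ rfl)) y ⟨hy₁, hy₂⟩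

theorem _root_.Set.Subsingleton.isOpenPacking_s4 {B : Set V} (hB : B.Subsingleton) :
    G.IsOpenPacking B :=
  fun _ hu _ hv huv => absurd (hB hu hv) huv

theorem _root_.Set.Subsingleton.isPacking {B : Set V} (hB : B.Subsingleton) : G.IsPacking B :=
  fun _ hu _ hv huv => absurd (hB hu hv) huv

theorem openPackingPartitionNum_le {k : ℕ} (c : V → Fin k)
    (hc : ∀ i, G.IsOpenPacking (c ⁻¹' {i})) : G.openPackingPartitionNum ≤ k :=
  Nat.sInf_le ⟨c, hc⟩

theorem exists_openPacking_coloring [Finite V] (G : SimpleGraph V) :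
    ∃ c : V → Fin G.openPackingPartitionNum, ∀ i, G.IsOpenPacking (c ⁻¹' {i}) := by
  have : Fintype V := Fintype.ofFinite V
  exact Nat.sInf_mem (s := {k | ∃ c : V → Fin k, ∀ i, G.IsOpenPacking (c ⁻¹' {i})})
    ⟨_, Fintype.equivFin V, fun i =>
      (Set.subsingleton_singleton.preimage (Fintype.equivFin V).injective).isOpenPacking_s4⟩

theorem exists_packing_coloring [Finite V] (G : SimpleGraph V) :
    ∃ c : V → Fin G.twoDistChromaticNum, ∀ i, G.IsPacking (c ⁻¹' {i}) := by
  have : Fintype V := Fintype.ofFinite V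
  exact Nat.sInf_mem (s := {k | ∃ c : V → Fin k, ∀ i, G.IsPacking (c ⁻¹' {i})})
    ⟨_, Fintype.equivFin V, fun i =>
      (Set.subsingleton_singleton.preimage (Fintype.equivFin V).injective).isPacking⟩

theorem openPackingPartitionNum_le_of_injective [Finite V'] (f : G →g G')
    (hf : Function.Injective f) : G.openPackingPartitionNum ≤ G'.openPackingPartitionNum := by
  obtain ⟨c, hc⟩ := G'.exists_openPacking_coloring
  exact openPackingPartitionNum_le (c ∘ f) fun i => (hc i).preimage f hf

theorem openPackingPartitionNum_boxProd_le_mul [Finite V] [Finite W] :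
    (G □ H).openPackingPartitionNum ≤ G.openPackingPartitionNum * H.twoDistChromaticNum := by
  obtain ⟨f, hf⟩ := G.exists_openPacking_coloring
  obtain ⟨g, hg⟩ := H.exists_packing_coloring
  refine openPackingPartitionNum_le (fun p => finProdFinEquiv (f p.1, g p.2)) fun i => ?_
  have hfiber : (fun p : V × W => finProdFinEquiv (f p.1, g p.2)) ⁻¹' {i} =
      (f ⁻¹' {(finProdFinEquiv.symm i).1} : Set V) ×ˢ
        (g ⁻¹' {(finProdFinEquiv.symm i).2} : Set W) := by
    ext p
    simp [← Equiv.eq_symm_apply, Prod.ext_iff]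
  rw [hfiber]
  exact (hf _).boxProd (hg _)

end SimpleGraph

theorem stmt_4 [Fintype V] [Fintype W] (G : SimpleGraph V) (H : SimpleGraph W) :
    (G □ H).openPackingPartitionNum ≤
      min (G.openPackingPartitionNum * H.twoDistChromaticNum)
        (G.twoDistChromaticNum * H.openPackingPartitionNum) := by
  refine le_min openPackingPartitionNum_boxProd_le_mul ?_
  calc (G □ H).openPackingPartitionNum
      ≤ (H □ G).openPackingPartitionNum :=
        openPackingPartitionNum_le_of_injective (boxProdComm (G := G) (H := H)).toHom
          (boxProdComm (G := G) (H := H)).injective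
    _ ≤ H.openPackingPartitionNum * G.twoDistChromaticNum := openPackingPartitionNum_boxProd_le_mul
    _ = G.twoDistChromaticNum * H.openPackingPartitionNum := mul_comm _ _
end

section
/- For any graph G of order n that is not isomorphic to C₄ or to 2P₂ (the disjoint union of two edges), p_o(G) + p_o(Ḡ) ≥ n, where Ḡ is the complement of G. -/
open SimpleGraph

variable {V W : Type*}

/-!
`p_o(H)` is the chromatic number of the two-step graph `H²` (vertices adjacent iff they have a
common neighbour), so it is at least the size of any clique of `H²`, e.g. of any neighbourhood, and
at least `n / 2` when `H` has no open packing of size 3. Open 3-packings cannot exist in both `G`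
and `Ḡ`, and if neither has one we are done.

So let `{a, b, c}` be an open packing of `G` (otherwise swap `G` and `Ḡ`, which swaps `C₄` and
`2P₂`). Two vertices `u ≠ v` without a common neighbour in `Ḡ` dominate all other vertices in `G`.
Hence `n ≤ deg u + deg v + 2`, and `u`, `v` cannot both lie outside `{a, b, c}`, since one of them
would be adjacent to two of `a, b, c`. This gives `p_o(Ḡ) ≥ n - 3`, and `p_o(Ḡ) ≥ n` once
`n > 2Δ + 2`. With `p_o(G) ≥ max(Δ, 1)` and `p_o(Ḡ) ≥ n / 2`, only the case
`n = 2 p_o(Ḡ) = 2Δ + 2` is left. There every colour class of an optimal colouring of `Ḡ²` is a pair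
`{u, v}` as above, so `G` is `Δ`-regular. The neighbourhoods of `a, b, c` are disjoint and miss one
of `a, b, c`, so `3Δ < n`, which leaves `n = 4` and `G` a perfect matching, i.e. `2P₂`.
-/

open Finset

lemma Finset.exists_mem_ne_ne [DecidableEq V] {s : Finset V} (hs : 2 < #s) (a b : V) :
    ∃ c ∈ s, c ≠ a ∧ c ≠ b := by
  have := pred_card_le_card_erase (s := s) (a := b)
  have := pred_card_le_card_erase (s := s.erase b) (a := a)
  obtain ⟨c, hc⟩ := card_pos.1 (by omega : 0 < #((s.erase b).erase a))
  simp only [mem_erase] at hc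
  exact ⟨c, hc.2.2, hc.1, hc.2.1⟩

namespace SimpleGraph

section Coloring

variable {H : SimpleGraph V} {k m : ℕ}

lemma IndepSetFree.card_le_of_isIndepSet (hH : H.IndepSetFree (m + 1)) {s : Finset V}
    (hs : H.IsIndepSet s) : #s ≤ m := by
  by_contra! hlt
  obtain ⟨t, hts, ht⟩ := exists_subset_card_eq (Nat.succ_le_of_lt hlt)
  exact hH t ⟨Set.Pairwise.mono (by simpa using hts) hs, ht⟩

variable [Fintype V]

lemma Coloring.card_colorClass_le (C : H.Coloring (Fin k)) (hH : H.IndepSetFree (m + 1))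
    (c : Fin k) : #{v | C v = c} ≤ m :=
  hH.card_le_of_isIndepSet (by simpa [Coloring.colorClass] using C.isIndepSet_colorClass c)

lemma Coloring.card_eq_sum_card_colorClass (C : H.Coloring (Fin k)) :
    Fintype.card V = ∑ c, #{v | C v = c} :=
  card_eq_sum_card_fiberwise fun _ _ ↦ mem_univ _

lemma Colorable.card_le_mul_of_indepSetFree (hc : H.Colorable k)
    (hH : H.IndepSetFree (m + 1)) : Fintype.card V ≤ m * k := by
  obtain ⟨C⟩ := hc
  calc Fintype.card V = ∑ c, #{v | C v = c} := C.card_eq_sum_card_colorClass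
    _ ≤ ∑ _c : Fin k, m := sum_le_sum fun c _ ↦ C.card_colorClass_le hH c
    _ = m * k := by simp [mul_comm]

lemma Colorable.exists_ne_not_adj_of_card_eq_mul (hc : H.Colorable k)
    (hH : H.IndepSetFree (m + 1)) (hcard : Fintype.card V = m * k) (hm : 1 < m) (u : V) :
    ∃ v, v ≠ u ∧ ¬H.Adj u v := by
  obtain ⟨C⟩ := hc
  by_cases hu : 1 < #{v | C v = C u}
  · obtain ⟨v, hv, hvu⟩ := exists_mem_ne hu u
    exact ⟨v, hvu, fun huv ↦ C.valid huv (mem_filter.1 hv).2.symm⟩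
  · have : Fintype.card V < m * k := calc
      Fintype.card V = ∑ c, #{v | C v = c} := C.card_eq_sum_card_colorClass
      _ < ∑ _c : Fin k, m :=
          sum_lt_sum (fun c _ ↦ C.card_colorClass_le hH c) ⟨C u, mem_univ _, by omega⟩
      _ = m * k := by simp [mul_comm]
    omega

end Coloring

abbrev twoK2 : SimpleGraph (Fin 2 ⊕ Fin 2) := (⊤ : SimpleGraph (Fin 2)) ⊕g ⊤

def Iso.compl {G : SimpleGraph V} {H : SimpleGraph W} (e : G ≃g H) : Gᶜ ≃g Hᶜ :=
  ⟨e.toEquiv, fun {a b} ↦ by simpa using fun _ : a ≠ b ↦ (e.map_adj_iff (v := a) (w := b)).not⟩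

def twoK2ComplIsoCycleGraph : twoK2ᶜ ≃g cycleGraph 4 where
  toFun := Sum.elim ![0, 2] ![1, 3]
  invFun := ![.inl 0, .inr 0, .inl 1, .inr 1]
  left_inv := by decide
  right_inv := by decide
  map_rel_iff' := by
    rintro (a | a) (b | b) <;> fin_cases a <;> fin_cases b <;> simp [cycleGraph_adj] <;> decide

variable (G : SimpleGraph V) {u v w a b c : V}

@[simp]
lemma twoStep_adj : G.twoStep.Adj u v ↔ u ≠ v ∧ ∃ w, G.Adj w u ∧ G.Adj w v :=
  Iff.rfl

lemma isOpenPacking_iff_isIndepSet_twoStep {s : Set V} :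
    G.IsOpenPacking s ↔ G.twoStep.IsIndepSet s := by
  simp only [IsOpenPacking, isIndepSet_iff, Set.Pairwise, twoStep_adj, not_and, not_exists]
  grind

lemma colorable_twoStep_iff {k : ℕ} :
    G.twoStep.Colorable k ↔ ∃ f : V → Fin k, ∀ i, G.IsOpenPacking (f ⁻¹' {i}) := by
  simp only [isOpenPacking_iff_isIndepSet_twoStep]
  refine ⟨fun ⟨C⟩ ↦ ⟨C, C.isIndepSet_colorClass⟩, fun ⟨f, hf⟩ ↦ ⟨Coloring.mk f ?_⟩⟩
  intro u v huv hf'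
  exact hf (f v) (Set.mem_preimage.2 hf') rfl huv.ne huv

lemma openPackingPartitionNum_eq_sInf :
    G.openPackingPartitionNum = sInf {k | G.twoStep.Colorable k} := by
  simp only [colorable_twoStep_iff, openPackingPartitionNum]

lemma adj_or_adj_of_not_twoStep_compl_adj (huv : u ≠ v) (h : ¬Gᶜ.twoStep.Adj u v)
    (hwu : w ≠ u) (hwv : w ≠ v) : G.Adj w u ∨ G.Adj w v := by
  by_contra! hw
  exact h ⟨huv, w, by simp [hwu, hw.1], by simp [hwv, hw.2]⟩

lemma not_adj_of_not_twoStep_adj (hab : a ≠ b) (hca : c ≠ a) (hcb : c ≠ b)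
    (hac : ¬G.twoStep.Adj a c) (hbc : ¬G.twoStep.Adj b c) (h : ¬Gᶜ.twoStep.Adj a b) :
    ¬G.Adj a b := by
  intro hadj
  exact h ⟨hab, c, ⟨hca, fun hca' ↦ hbc ⟨hcb.symm, a, hadj, hca'.symm⟩⟩,
    ⟨hcb, fun hcb' ↦ hac ⟨hca.symm, b, hadj.symm, hcb'.symm⟩⟩⟩

lemma card_filter_adj_le_one_of_isIndepSet_twoStep [DecidableRel G.Adj] {s : Finset V}
    (hs : G.twoStep.IsIndepSet s) (x : V) : #{y ∈ s | G.Adj x y} ≤ 1 :=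
  card_le_one.2 fun y hy z hz ↦ by
    rw [mem_filter] at hy hz
    by_contra hyz
    exact hs hy.1 hz.1 hyz ⟨hyz, x, hy.2, hz.2⟩

lemma twoStep_compl_adj_of_isIndepSet {s : Finset V} (hs : G.twoStep.IsIndepSet s)
    (hs₃ : 2 < #s) (hu : u ∉ s) (hv : v ∉ s) (huv : u ≠ v) : Gᶜ.twoStep.Adj u v := by
  classical
  by_contra h
  have hcover : s ⊆ {x ∈ s | G.Adj u x} ∪ {x ∈ s | G.Adj v x} := fun x hx ↦ by
    rcases G.adj_or_adj_of_not_twoStep_compl_adj huv h (ne_of_mem_of_not_mem hx hu)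
      (ne_of_mem_of_not_mem hx hv) with hxu | hxv
    · exact mem_union_left _ (mem_filter.2 ⟨hx, hxu.symm⟩)
    · exact mem_union_right _ (mem_filter.2 ⟨hx, hxv.symm⟩)
  have := (card_le_card hcover).trans (card_union_le _ _)
  have := G.card_filter_adj_le_one_of_isIndepSet_twoStep hs u
  have := G.card_filter_adj_le_one_of_isIndepSet_twoStep hs v
  omega

/-- By `twoStep_compl_adj_of_isIndepSet`, open 3-packings of `G` and of `Gᶜ` would share two
vertices `a, b`, and `not_adj_of_not_twoStep_adj` makes them non-adjacent in both graphs. -/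
lemma indepSetFree_three_twoStep_compl {s : Finset V} (hs : G.twoStep.IsNIndepSet 3 s) :
    Gᶜ.twoStep.IndepSetFree 3 := by
  classical
  intro t ht
  have hs₃ : 2 < #s := by rw [hs.card_eq]; norm_num
  have ht₃ : 2 < #t := by rw [ht.card_eq]; norm_num
  have hst : #(s \ t) ≤ 1 := card_le_one.2 fun x hx y hy ↦ by
    rw [mem_sdiff] at hx hy
    by_contra hxy
    have := Gᶜ.twoStep_compl_adj_of_isIndepSet ht.isIndepSet ht₃ hx.2 hy.2 hxy
    rw [compl_compl] at this
    exact hs.isIndepSet hx.1 hy.1 hxy this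
  obtain ⟨a, ha, b, hb, hab⟩ := one_lt_card.1 (by
    have := card_sdiff_add_card_inter s t
    omega : 1 < #(s ∩ t))
  rw [mem_inter] at ha hb
  obtain ⟨c, hc, hca, hcb⟩ := exists_mem_ne_ne hs₃ a b
  obtain ⟨d, hd, hda, hdb⟩ := exists_mem_ne_ne ht₃ a b
  have hGab : ¬G.Adj a b := G.not_adj_of_not_twoStep_adj hab hca hcb
    (hs.isIndepSet ha.1 hc hca.symm) (hs.isIndepSet hb.1 hc hcb.symm) (ht.isIndepSet ha.2 hb.2 hab)
  have hGab' : ¬Gᶜ.Adj a b := Gᶜ.not_adj_of_not_twoStep_adj hab hda hdb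
    (ht.isIndepSet ha.2 hd hda.symm) (ht.isIndepSet hb.2 hd hdb.symm)
    (by simpa using hs.isIndepSet ha.1 hb.1 hab)
  exact hGab' ⟨hab, hGab⟩

variable [Fintype V]

lemma colorable_twoStep_openPackingPartitionNum :
    G.twoStep.Colorable G.openPackingPartitionNum := by
  rw [openPackingPartitionNum_eq_sInf]
  exact Nat.sInf_mem (s := {k | G.twoStep.Colorable k}) ⟨_, G.twoStep.colorable_of_fintype⟩

variable {G} in
lemma IsClique.card_le_openPackingPartitionNum {s : Finset V} (hs : G.twoStep.IsClique s) :
    #s ≤ G.openPackingPartitionNum :=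
  hs.card_le_of_colorable G.colorable_twoStep_openPackingPartitionNum

lemma one_le_openPackingPartitionNum [Nonempty V] : 1 ≤ G.openPackingPartitionNum := by
  classical
  obtain ⟨v⟩ := ‹Nonempty V›
  simpa using IsClique.card_le_openPackingPartitionNum (G := G) (s := {v}) (by simp)

lemma card_le_two_mul_openPackingPartitionNum (hG : G.twoStep.IndepSetFree 3) :
    Fintype.card V ≤ 2 * G.openPackingPartitionNum :=
  G.colorable_twoStep_openPackingPartitionNum.card_le_mul_of_indepSetFree hG

lemma card_sub_three_le_openPackingPartitionNum_compl {s : Finset V}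
    (hs : G.twoStep.IsNIndepSet 3 s) : Fintype.card V - 3 ≤ Gᶜ.openPackingPartitionNum := by
  classical
  have := IsClique.card_le_openPackingPartitionNum (G := Gᶜ) (s := univ \ s)
    fun u hu v hv huv ↦ G.twoStep_compl_adj_of_isIndepSet hs.isIndepSet
      (by rw [hs.card_eq]; norm_num) (by simpa using hu) (by simpa using hv) huv
  rwa [card_univ_sdiff, hs.card_eq] at this

lemma nonempty_iso_twoK2 (hcard : Fintype.card V = 4) {u w₁ v w₂ : V}
    (huw₁ : u ≠ w₁) (huv : u ≠ v) (huw₂ : u ≠ w₂) (hw₁v : w₁ ≠ v) (hw₁w₂ : w₁ ≠ w₂)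
    (hvw₂ : v ≠ w₂) (h₁ : G.Adj u w₁) (h₂ : G.Adj v w₂) (n₁ : ¬G.Adj u v) (n₂ : ¬G.Adj u w₂)
    (n₃ : ¬G.Adj w₁ v) (n₄ : ¬G.Adj w₁ w₂) : Nonempty (G ≃g twoK2) := by
  set f : Fin 2 ⊕ Fin 2 → V := Sum.elim ![u, w₁] ![v, w₂]
  have hf : Function.Injective f := by
    rintro (a | a) (b | b) <;> fin_cases a <;> fin_cases b <;>
      simp [f, huw₁, huv, huw₂, hw₁v, hw₁w₂, hvw₂, huw₁.symm, huv.symm, huw₂.symm, hw₁v.symm,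
        hw₁w₂.symm, hvw₂.symm]
  have hbij : Function.Bijective f :=
    (Fintype.bijective_iff_injective_and_card f).2 ⟨hf, by simp [hcard]⟩
  refine ⟨(RelIso.mk (Equiv.ofBijective f hbij) ?_ : _ ≃g G).symm⟩
  rintro (a | a) (b | b) <;> fin_cases a <;> fin_cases b <;>
    simp [f, h₁, h₂, h₁.symm, h₂.symm, n₁, n₂, n₃, n₄, mt G.adj_symm n₁, mt G.adj_symm n₂,
      mt G.adj_symm n₃, mt G.adj_symm n₄]

section Degree

variable [DecidableRel G.Adj]

lemma degree_le_openPackingPartitionNum (v : V) : G.degree v ≤ G.openPackingPartitionNum := by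
  rw [← card_neighborFinset_eq_degree]
  exact IsClique.card_le_openPackingPartitionNum
    fun x hx y hy hxy ↦ ⟨hxy, v, by simpa using hx, by simpa using hy⟩

lemma disjoint_neighborFinset_of_not_twoStep_adj (hab : a ≠ b) (h : ¬G.twoStep.Adj a b) :
    Disjoint (G.neighborFinset a) (G.neighborFinset b) :=
  Finset.disjoint_left.2 fun w hwa hwb ↦
    h ⟨hab, w, ((G.mem_neighborFinset a w).1 hwa).symm, ((G.mem_neighborFinset b w).1 hwb).symm⟩

lemma card_le_degree_add_degree_add_two (huv : u ≠ v) (h : ¬Gᶜ.twoStep.Adj u v) :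
    Fintype.card V ≤ G.degree u + G.degree v + 2 := by
  classical
  have hcover : (univ : Finset V) ⊆ G.neighborFinset u ∪ G.neighborFinset v ∪ {u, v} := by
    intro w _
    by_cases hwu : w = u
    · simp [hwu]
    by_cases hwv : w = v
    · simp [hwv]
    rcases G.adj_or_adj_of_not_twoStep_compl_adj huv h hwu hwv with hw | hw <;>
      simp [hw.symm]
  calc Fintype.card V = #(univ : Finset V) := rfl
    _ ≤ #(G.neighborFinset u ∪ G.neighborFinset v ∪ {u, v}) := card_le_card hcover
    _ ≤ #(G.neighborFinset u) + #(G.neighborFinset v) + #({u, v} : Finset V) :=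
        (card_union_le _ _).trans (by gcongr; exact card_union_le _ _)
    _ ≤ G.degree u + G.degree v + 2 := by
        simp only [card_neighborFinset_eq_degree]; gcongr; exact card_le_two

lemma card_le_openPackingPartitionNum_compl_of_degree_le {d : ℕ} (hd : ∀ v, G.degree v ≤ d)
    (hn : 2 * d + 2 < Fintype.card V) : Fintype.card V ≤ Gᶜ.openPackingPartitionNum := by
  simpa using IsClique.card_le_openPackingPartitionNum (G := Gᶜ) (s := univ)
    fun u _ v _ huv ↦ by
      by_contra h
      have := G.card_le_degree_add_degree_add_two huv h
      have := hd u
      have := hd v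
      omega

lemma isRegularOfDegree_of_card_eq_two_mul {d : ℕ} (hGc : Gᶜ.twoStep.IndepSetFree 3)
    (hq : Fintype.card V = 2 * Gᶜ.openPackingPartitionNum) (hd : ∀ v, G.degree v ≤ d)
    (hn : Fintype.card V = 2 * d + 2) : G.IsRegularOfDegree d := by
  intro u
  obtain ⟨v, hvu, huv⟩ := Gᶜ.colorable_twoStep_openPackingPartitionNum
    |>.exists_ne_not_adj_of_card_eq_mul hGc hq one_lt_two u
  have := G.card_le_degree_add_degree_add_two hvu.symm huv
  have := hd u
  have := hd v
  omega

lemma degree_add_degree_add_degree_lt_card (hab : a ≠ b) (hac : a ≠ c) (hbc : b ≠ c)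
    (h₁ : ¬G.twoStep.Adj a b) (h₂ : ¬G.twoStep.Adj a c) (h₃ : ¬G.twoStep.Adj b c) :
    G.degree a + G.degree b + G.degree c < Fintype.card V := by
  classical
  set U := G.neighborFinset a ∪ G.neighborFinset b ∪ G.neighborFinset c
  have hU : #U = G.degree a + G.degree b + G.degree c := by
    rw [card_union_of_disjoint (disjoint_union_left.2
        ⟨G.disjoint_neighborFinset_of_not_twoStep_adj hac h₂,
          G.disjoint_neighborFinset_of_not_twoStep_adj hbc h₃⟩),
      card_union_of_disjoint (G.disjoint_neighborFinset_of_not_twoStep_adj hab h₁)]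
    simp only [card_neighborFinset_eq_degree]
  obtain ⟨x, hx⟩ : ∃ x, x ∉ U := by
    by_cases hab' : G.Adj a b
    · refine ⟨c, ?_⟩
      simp only [U, mem_union, mem_neighborFinset, SimpleGraph.irrefl, or_false, not_or]
      exact ⟨fun h ↦ h₃ ⟨hbc, a, hab', h⟩, fun h ↦ h₂ ⟨hac, b, hab'.symm, h⟩⟩
    by_cases hac' : G.Adj a c
    · refine ⟨b, ?_⟩
      simp only [U, mem_union, mem_neighborFinset, SimpleGraph.irrefl, or_false, not_or]
      exact ⟨hab', fun h ↦ h₁ ⟨hab, c, hac'.symm, h⟩⟩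
    exact ⟨a, by simp [U, adj_comm, hab', hac']⟩
  exact hU ▸ card_lt_univ_of_notMem hx

lemma nonempty_iso_twoK2_of_isRegularOfDegree_one (hcard : Fintype.card V = 4)
    (hG : G.IsRegularOfDegree 1) : Nonempty (G ≃g twoK2) := by
  classical
  have hunique : ∀ {z x y}, G.Adj z x → G.Adj z y → x = y := fun hx hy ↦
    card_le_one.1 (hG _).le _ ((G.mem_neighborFinset _ _).2 hx) _ ((G.mem_neighborFinset _ _).2 hy)
  have hnbr : ∀ z, ∃ x, G.Adj z x := fun z ↦
    (G.degree_pos_iff_exists_adj z).1 (by rw [hG z]; norm_num)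
  obtain ⟨u⟩ : Nonempty V := Fintype.card_pos_iff.1 (by omega)
  obtain ⟨w₁, h₁⟩ := hnbr u
  obtain ⟨v, -, hvu, hvw₁⟩ := exists_mem_ne_ne (s := univ) (by simp [hcard]) u w₁
  obtain ⟨w₂, h₂⟩ := hnbr v
  have hw₂u : w₂ ≠ u := fun h ↦ hvw₁ (hunique (h ▸ h₂.symm) h₁)
  have hw₂w₁ : w₂ ≠ w₁ := fun h ↦ hvu (hunique (h ▸ h₂.symm) h₁.symm)
  exact G.nonempty_iso_twoK2 hcard (G.ne_of_adj h₁) hvu.symm hw₂u.symm hvw₁.symm hw₂w₁.symm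
    (G.ne_of_adj h₂) h₁ h₂ (fun h ↦ hvw₁ (hunique h h₁)) (fun h ↦ hw₂w₁ (hunique h h₁))
    (fun h ↦ hvu (hunique h h₁.symm)) (fun h ↦ hw₂u (hunique h h₁.symm))

end Degree

lemma card_le_openPackingPartitionNum_add_of_isNIndepSet {s : Finset V}
    (hs : G.twoStep.IsNIndepSet 3 s) (h2K2 : ¬Nonempty (G ≃g twoK2)) :
    Fintype.card V ≤ G.openPackingPartitionNum + Gᶜ.openPackingPartitionNum := by
  classical
  have hGc := G.indepSetFree_three_twoStep_compl hs
  have h₀ := G.card_sub_three_le_openPackingPartitionNum_compl hs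
  obtain ⟨a, b, c, hab, hac, hbc, rfl⟩ := card_eq_three.1 hs.card_eq
  have hn : 3 ≤ Fintype.card V := hs.card_eq ▸ card_le_univ _
  have : Nonempty V := ⟨a⟩
  have h₁ := G.one_le_openPackingPartitionNum
  have h₂ : G.maxDegree ≤ G.openPackingPartitionNum :=
    maxDegree_le_of_forall_degree_le _ _ G.degree_le_openPackingPartitionNum
  have h₃ := Gᶜ.card_le_two_mul_openPackingPartitionNum hGc
  have h₄ := G.card_le_openPackingPartitionNum_compl_of_degree_le G.degree_le_maxDegree
  by_cases hreg : Fintype.card V = 2 * Gᶜ.openPackingPartitionNum ∧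
      Fintype.card V = 2 * G.maxDegree + 2
  · have hΔ := G.isRegularOfDegree_of_card_eq_two_mul hGc hreg.1 G.degree_le_maxDegree hreg.2
    have h₅ := G.degree_add_degree_add_degree_lt_card hab hac hbc
      (hs.isIndepSet (by simp) (by simp) hab) (hs.isIndepSet (by simp) (by simp) hac)
      (hs.isIndepSet (by simp) (by simp) hbc)
    rw [hΔ a, hΔ b, hΔ c] at h₅
    have : G.maxDegree ≠ 1 := fun h ↦
      h2K2 (G.nonempty_iso_twoK2_of_isRegularOfDegree_one (by omega) (h ▸ hΔ))
    omega
  · omega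

end SimpleGraph

theorem stmt_10 [Fintype V] (G : SimpleGraph V)
    (hC4 : ¬Nonempty (G ≃g cycleGraph 4))
    (h2P2 : ¬Nonempty (G ≃g ((⊤ : SimpleGraph (Fin 2)) ⊕g (⊤ : SimpleGraph (Fin 2))))) :
    Fintype.card V ≤ G.openPackingPartitionNum + Gᶜ.openPackingPartitionNum := by
  by_cases hG : G.twoStep.IndepSetFree 3
  · by_cases hGc : Gᶜ.twoStep.IndepSetFree 3
    · have := G.card_le_two_mul_openPackingPartitionNum hG
      have := Gᶜ.card_le_two_mul_openPackingPartitionNum hGc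
      omega
    · obtain ⟨s, hs⟩ := not_forall_not.1 hGc
      have h2P2c : ¬Nonempty (Gᶜ ≃g twoK2) := fun ⟨e⟩ ↦
        hC4 ⟨(compl_compl G ▸ e.compl : G ≃g _).trans twoK2ComplIsoCycleGraph⟩
      have := Gᶜ.card_le_openPackingPartitionNum_add_of_isNIndepSet hs h2P2c
      rw [compl_compl] at this
      omega
  · obtain ⟨s, hs⟩ := not_forall_not.1 hG
    exact G.card_le_openPackingPartitionNum_add_of_isNIndepSet hs h2P2
end

section
/- If the complement Ḡ of a graph G of order n is bipartite, then χ(N(G)) = ω(N(G)), where N(G) is the two-step graph of G. -/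
open SimpleGraph

variable {V W : Type*}

/-!
The sides `A`, `Aᶜ` of a bipartition of `Gᶜ` are cliques of `G`. A clique of `G` is, in the
two-step graph `H`, either a clique or (then having at most two vertices) an independent set, so `H`
is bipartite, split, or co-bipartite. In each case `H` has a proper colouring by a map `V → V` whose
range is a clique of `H`, which forces `χ(H) = ω(H)`. Only the co-bipartite case needs `G`: vertices
`a ∈ A` and `b ∉ A` are non-adjacent in `H` exactly when each is the only neighbour of the other
across the bipartition, or when neither has any neighbour across it. Merging each such `b` into one
such `a`, injectively, gives the colouring; among the vertices without neighbours across,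
injectivity comes from embedding the smaller side into the larger.
-/

namespace SimpleGraph

structure IsCliqueColoring (H : SimpleGraph V) (f : V → V) : Prop where
  map_ne : ∀ ⦃u v⦄, H.Adj u v → f u ≠ f v
  isClique_range : H.IsClique (Set.range f)

section CliqueColoring

variable {H : SimpleGraph V} {f : V → V}

theorem IsCliqueColoring.chromaticNumber_eq_cliqueNum [Fintype V] (hf : H.IsCliqueColoring f) :
    H.chromaticNumber = H.cliqueNum := by
  classical
  refine le_antisymm ?_ H.cliqueNum_le_chromaticNumber
  let C : H.Coloring (Set.range f) :=
    Coloring.mk (Set.rangeFactorization f) fun huv h => hf.map_ne huv (congrArg Subtype.val h)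
  have hK : H.IsClique ((Set.range f).toFinset : Set V) := by
    simpa using hf.isClique_range
  calc H.chromaticNumber ≤ Fintype.card (Set.range f) := C.colorable.chromaticNumber_le
    _ = (Set.range f).toFinset.card := by rw [Set.toFinset_card]
    _ ≤ H.cliqueNum := by exact_mod_cast hK.card_le_cliqueNum

theorem exists_isCliqueColoring_of_isClique_of_isIndepSet_compl {K : Set V} (hK : H.IsClique K)
    (hI : H.IsIndepSet Kᶜ) : ∃ f, H.IsCliqueColoring f := by
  classical
  by_cases hext : ∃ x ∉ K, ∀ k ∈ K, H.Adj x k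
  · obtain ⟨x, hxK, hx⟩ := hext
    refine ⟨fun y => if y ∈ K then y else x, fun y z hyz => ?_, ?_⟩
    · by_cases hy : y ∈ K <;> by_cases hz : z ∈ K <;> simp only [hy, hz, if_true, if_false]
      · exact hyz.ne
      · exact ne_of_mem_of_not_mem hy hxK
      · exact (ne_of_mem_of_not_mem hz hxK).symm
      · exact absurd hyz (hI hy hz hyz.ne)
    · refine (isClique_insert.mpr ⟨hK, fun k hk _ => hx k hk⟩).subset ?_
      rintro _ ⟨y, rfl⟩
      by_cases hy : y ∈ K <;> simp [hy]
  · push Not at hext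
    choose! k hkK hk using hext
    refine ⟨fun y => if y ∈ K then y else k y, fun y z hyz => ?_, ?_⟩
    · by_cases hy : y ∈ K <;> by_cases hz : z ∈ K <;> simp only [hy, hz, if_true, if_false]
      · exact hyz.ne
      · exact fun h => hk z hz (h ▸ hyz.symm)
      · exact fun h => hk y hy (h ▸ hyz)
      · exact absurd hyz (hI hy hz hyz.ne)
    · refine hK.subset ?_
      rintro _ ⟨y, rfl⟩
      by_cases hy : y ∈ K <;> simp [hy, hkK]

theorem exists_isCliqueColoring_of_isIndepSet_of_isIndepSet_compl {A : Set V}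
    (hA : H.IsIndepSet A) (hAc : H.IsIndepSet Aᶜ) : ∃ f, H.IsCliqueColoring f := by
  classical
  by_cases hedge : ∃ u v, H.Adj u v
  · obtain ⟨u, v, huv⟩ := hedge
    refine ⟨fun x => if x ∈ A then u else v, fun x y hxy => ?_, ?_⟩
    · by_cases hx : x ∈ A <;> by_cases hy : y ∈ A <;> simp only [hx, hy, if_true, if_false]
      · exact absurd hxy (hA hx hy hxy.ne)
      · exact huv.ne
      · exact huv.ne.symm
      · exact absurd hxy (hAc hx hy hxy.ne)
    · refine (isClique_pair.mpr fun _ => huv).subset ?_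
      rintro _ ⟨x, rfl⟩
      by_cases hx : x ∈ A <;> simp [hx]
  · push Not at hedge
    exact exists_isCliqueColoring_of_isClique_of_isIndepSet_compl isClique_empty
      fun x _ y _ _ => hedge x y

theorem exists_isCliqueColoring_of_injOn {A : Set V} (hA : H.IsClique A) (hAc : H.IsClique Aᶜ)
    {g : V → V} (hg : ∀ b ∉ A, (∃ a ∈ A, ¬H.Adj a b) → g b ∈ A ∧ ¬H.Adj (g b) b)
    (hinj : Set.InjOn g {b | b ∉ A ∧ ∃ a ∈ A, ¬H.Adj a b}) : ∃ f, H.IsCliqueColoring f := by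
  classical
  set D := {b | b ∉ A ∧ ∃ a ∈ A, ¬H.Adj a b}
  set S := A ∪ {b | b ∉ A ∧ ∀ a ∈ A, H.Adj a b}
  have hS : H.IsClique S := by
    rintro x (hx | hx) y (hy | hy) hxy
    · exact hA hx hy hxy
    · exact hy.2 x hx
    · exact (hx.2 y hy).symm
    · exact hAc hx.1 hy.1 hxy
  refine ⟨fun y => if y ∈ D then g y else y, fun y z hyz => ?_, hS.subset ?_⟩
  · by_cases hy : y ∈ D <;> by_cases hz : z ∈ D <;> simp only [hy, hz, if_true, if_false]
    · exact fun h => hyz.ne (hinj hy hz h)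
    · exact fun h => (hg y hy.1 hy.2).2 (h ▸ hyz.symm)
    · exact fun h => (hg z hz.1 hz.2).2 (h ▸ hyz)
    · exact hyz.ne
  · rintro _ ⟨y, rfl⟩
    dsimp only
    split_ifs with hy
    · exact Or.inl (hg y hy.1 hy.2).1
    · by_cases hyA : y ∈ A
      · exact Or.inl hyA
      · exact Or.inr ⟨hyA, fun a ha => by_contra fun h => hy ⟨hyA, a, ha, h⟩⟩

end CliqueColoring

def farFrom (G : SimpleGraph V) (A : Set V) : Set V := {v | v ∉ A ∧ ∀ a ∈ A, ¬G.Adj a v}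

section TwoStep

variable {G : SimpleGraph V} {A : Set V}

theorem isIndepSet_twoStep_of_not_isClique (hA : G.IsClique A) (hA' : ¬G.twoStep.IsClique A) :
    G.twoStep.IsIndepSet A := by
  obtain ⟨u, hu, v, hv, huv, hnadj⟩ : ∃ u ∈ A, ∃ v ∈ A, u ≠ v ∧ ¬G.twoStep.Adj u v := by
    simpa [IsClique, Set.Pairwise] using hA'
  have hpair : ∀ w ∈ A, w = u ∨ w = v := by
    intro w hw
    by_contra! h
    exact hnadj ⟨huv, w, hA hw hu h.1, hA hw hv h.2⟩
  intro x hx y hy hxy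
  rcases hpair x hx with rfl | rfl <;> rcases hpair y hy with rfl | rfl
  · exact absurd rfl hxy
  · exact hnadj
  · exact fun h => hnadj h.symm
  · exact absurd rfl hxy

theorem not_twoStep_adj_of_mem_farFrom {a b : V} (ha : a ∈ G.farFrom Aᶜ) (hb : b ∈ G.farFrom A) :
    ¬G.twoStep.Adj a b := by
  rintro ⟨-, w, hwa, hwb⟩
  by_cases hw : w ∈ A
  · exact hb.2 w hw hwb
  · exact ha.2 w hw hwa

theorem eq_of_adj_of_not_twoStep_adj {B : Set V} (hB : G.IsClique B) {a b b' : V} (hb : b ∈ B)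
    (hb' : b' ∈ B) (hab : a ≠ b) (hadj : G.Adj a b') (h : ¬G.twoStep.Adj a b) : b' = b := by
  by_contra hne
  exact h ⟨hab, b', hadj.symm, hB hb' hb hne⟩

theorem exists_isCliqueColoring_twoStep_of_embedding (hA : G.IsClique A) (hAc : G.IsClique Aᶜ)
    (hA' : G.twoStep.IsClique A) (hAc' : G.twoStep.IsClique Aᶜ)
    (j : G.farFrom A ↪ G.farFrom Aᶜ) : ∃ f, G.twoStep.IsCliqueColoring f := by
  classical
  set D := {b | b ∉ A ∧ ∃ a ∈ A, ¬G.twoStep.Adj a b}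
  choose! m hmA hm using fun b (hb : b ∈ D) => hb.2
  have hm_ne : ∀ b ∈ D, m b ≠ b := fun b hb h => hb.1 (h ▸ hmA b hb)
  -- a neighbour of `b` in `A` other than `m b` would be a common neighbour of `b` and `m b`
  have hm_adj : ∀ b ∈ D, b ∉ G.farFrom A → G.Adj (m b) b := by
    intro b hb hfar
    obtain ⟨a, ha, hab⟩ : ∃ a ∈ A, G.Adj a b := by simpa [farFrom, hb.1] using hfar
    have hb' : ¬G.twoStep.Adj b (m b) := fun h => hm b hb h.symm
    exact eq_of_adj_of_not_twoStep_adj hA (hmA b hb) ha (hm_ne b hb).symm hab.symm hb' ▸ hab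
  refine exists_isCliqueColoring_of_injOn hA' hAc'
    (g := fun b => if h : b ∈ G.farFrom A then j ⟨b, h⟩ else m b) (fun b hb hD => ?_) ?_
  · split_ifs with hfar
    · exact ⟨not_not.mp (j ⟨b, hfar⟩).2.1, not_twoStep_adj_of_mem_farFrom (j ⟨b, hfar⟩).2 hfar⟩
    · exact ⟨hmA b ⟨hb, hD⟩, hm b ⟨hb, hD⟩⟩
  · intro b hb b' hb' heq
    dsimp only at heq
    split_ifs at heq with h h' h'
    · exact congrArg Subtype.val (j.injective (Subtype.ext heq))
    · exact absurd (heq ▸ (hm_adj b' hb' h').symm) ((j ⟨b, h⟩).2.2 b' hb'.1)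
    · exact absurd (heq.symm ▸ (hm_adj b hb h).symm) ((j ⟨b', h'⟩).2.2 b hb.1)
    · exact eq_of_adj_of_not_twoStep_adj hAc hb'.1 hb.1 (hm_ne b' hb')
        (heq ▸ hm_adj b hb h) (hm b' hb')

theorem exists_isCliqueColoring_twoStep_of_isClique (hA : G.IsClique A) (hAc : G.IsClique Aᶜ)
    (hA' : G.twoStep.IsClique A) (hAc' : G.twoStep.IsClique Aᶜ) :
    ∃ f, G.twoStep.IsCliqueColoring f := by
  obtain ⟨⟨j⟩⟩ | ⟨⟨j⟩⟩ := Function.Embedding.total (G.farFrom A) (G.farFrom Aᶜ)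
  · exact exists_isCliqueColoring_twoStep_of_embedding hA hAc hA' hAc' j
  · exact exists_isCliqueColoring_twoStep_of_embedding hAc (by rwa [compl_compl]) hAc'
      (by rwa [compl_compl]) (by rwa [compl_compl])

end TwoStep

theorem exists_isClique_isClique_compl_of_colorable_compl {G : SimpleGraph V} (h : Gᶜ.Colorable 2) :
    ∃ A : Set V, G.IsClique A ∧ G.IsClique Aᶜ := by
  obtain ⟨C⟩ := h
  have hcompl : (C.colorClass 0)ᶜ = C.colorClass 1 := by
    ext v
    simpa [Coloring.colorClass] using ⟨Fin.eq_one_of_ne_zero (C v), fun h => h ▸ one_ne_zero⟩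
  exact ⟨C.colorClass 0, G.isIndepSet_compl.mp (C.isIndepSet_colorClass 0),
    hcompl ▸ G.isIndepSet_compl.mp (C.isIndepSet_colorClass 1)⟩

end SimpleGraph

theorem stmt_14 [Fintype V] (G : SimpleGraph V) (hbip : Gᶜ.Colorable 2) :
    G.twoStep.chromaticNumber = (G.twoStep.cliqueNum : ℕ∞) := by
  obtain ⟨A, hA, hAc⟩ := exists_isClique_isClique_compl_of_colorable_compl hbip
  obtain ⟨f, hf⟩ : ∃ f, G.twoStep.IsCliqueColoring f := by
    by_cases hA' : G.twoStep.IsClique A <;> by_cases hAc' : G.twoStep.IsClique Aᶜ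
    · exact exists_isCliqueColoring_twoStep_of_isClique hA hAc hA' hAc'
    · exact exists_isCliqueColoring_of_isClique_of_isIndepSet_compl hA'
        (isIndepSet_twoStep_of_not_isClique hAc hAc')
    · exact exists_isCliqueColoring_of_isClique_of_isIndepSet_compl hAc'
        ((compl_compl A).symm ▸ isIndepSet_twoStep_of_not_isClique hA hA')
    · exact exists_isCliqueColoring_of_isIndepSet_of_isIndepSet_compl
        (isIndepSet_twoStep_of_not_isClique hA hA')
        (isIndepSet_twoStep_of_not_isClique hAc hAc')
  exact hf.chromaticNumber_eq_cliqueNum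
end
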